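/- arXiv:1710.00771 — 7 statements merged into one kernel-verified Lean document; each statement's English description precedes it below -/
import Mathlib

section
/- The maximum of the function f(x) = (1-x)/(x^2 + (1-x)^2) over x in [0, 1/2] is at most 1.208. -/
theorem stmt_0 :
    ∀ x : ℝ, x ∈ Set.Icc (0:ℝ) (1/2) →
      (1 - x) / (x^2 + (1 - x)^2) ≤ 1.208 := by
  intro x ⟨h0, h1⟩
  have hd : (0:ℝ) < x^2 + (1 - x)^2 := by nlinarith
  rw [div_le_iff₀ hd]
  nlinarith [sq_nonneg (x - 0.3), sq_nonneg x, sq_nonneg (1 - 2*x)]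
end

section
/- For every f in [0, 1/2] and every T ≥ log₂(1/ε) + 2.575 (with ε in (0,1)), (2f(1-f))^T ≤ ε · f² / (f² + (1-f)²). -/
/-!
Put `x = 2 f (1 - f) ∈ (0, 1/2]`. Since `x ≤ 1/2`, the factor `x ^ log₂ (1/ε)` is at most `ε`,
so it remains to show `x ^ 2.575 ≤ f² / (f² + (1 - f)²)`. As `x² = 4 f² (1 - f)²` and
`f² + (1 - f)² = 1 - x`, this is `4 (1 - f)² (1 - x) x ^ (23/40) ≤ 1`. Replacing the concave
`x ^ (23/40)` by its weighted AM-GM (tangent line) bound at `x = 21/100` turns this into a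
polynomial inequality in `f`; it is tight to within `10⁻³` near `f ≈ 0.118`.
-/

open Real

lemma two_mul_mul_one_sub_le_half (f : ℝ) : 2 * f * (1 - f) ≤ 1 / 2 := by
  nlinarith [sq_nonneg (2 * f - 1)]

lemma rpow_logb_one_div_le {x ε : ℝ} (hx0 : 0 ≤ x) (hx : x ≤ 1 / 2) (hε0 : 0 < ε) (hε1 : ε ≤ 1) :
    x ^ logb 2 (1 / ε) ≤ ε := by
  have hL : 0 ≤ logb 2 (1 / ε) :=
    logb_nonneg one_lt_two ((one_le_div hε0).2 hε1)
  calc x ^ logb 2 (1 / ε) ≤ (1 / 2) ^ logb 2 (1 / ε) := rpow_le_rpow hx0 hx hL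
    _ = ε := by
      rw [div_rpow zero_le_one zero_le_two, one_rpow,
        rpow_logb two_pos one_lt_two.ne' (by positivity), one_div_one_div]

lemma two_mul_mul_one_sub_nonneg {f : ℝ} (h0 : 0 ≤ f) (h1 : f ≤ 1) : 0 ≤ 2 * f * (1 - f) := by
  have : 0 ≤ 1 - f := by linarith
  positivity

lemma rpow_twentythree_fortieths_mul_le {x : ℝ} (hx : 0 ≤ x) :
    x ^ (23 / 40 : ℝ) * (5151 / 10000) ≤ 23 / 40 * x + 17 / 40 * (21 / 100) := by
  have hs : (5151 / 10000 : ℝ) ≤ (21 / 100 : ℝ) ^ (17 / 40 : ℝ) := by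
    rw [div_eq_mul_inv (17 : ℝ), rpow_mul (by norm_num),
      le_rpow_inv_iff_of_pos (by norm_num) (by positivity) (by norm_num)]
    norm_num
  calc x ^ (23 / 40 : ℝ) * (5151 / 10000)
      ≤ x ^ (23 / 40 : ℝ) * (21 / 100 : ℝ) ^ (17 / 40 : ℝ) := by gcongr
    _ ≤ 23 / 40 * x + 17 / 40 * (21 / 100) :=
        geom_mean_le_arith_mean2_weighted (by norm_num) (by norm_num) hx (by norm_num) (by norm_num)

lemma four_mul_one_sub_sq_mul_tangent_le {f : ℝ} (h0 : 0 ≤ f) (h1 : f ≤ 1 / 2) :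
    4 * (1 - f) ^ 2 * (1 - 2 * f * (1 - f)) * (23 / 40 * (2 * f * (1 - f)) + 17 / 40 * (21 / 100))
      ≤ 5151 / 10000 := by
  have h1' : 0 ≤ 1 / 2 - f := by linarith
  nlinarith [sq_nonneg (f - 0.11826), mul_nonneg (mul_nonneg h0 h1') (sq_nonneg (f - 0.11826))]

lemma four_mul_one_sub_sq_mul_rpow_le {f : ℝ} (h0 : 0 ≤ f) (h1 : f ≤ 1 / 2) :
    4 * (1 - f) ^ 2 * (1 - 2 * f * (1 - f)) * (2 * f * (1 - f)) ^ (23 / 40 : ℝ) ≤ 1 := by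
  have hx := two_mul_mul_one_sub_nonneg h0 (by linarith)
  have hc : 0 ≤ 4 * (1 - f) ^ 2 * (1 - 2 * f * (1 - f)) := by
    have := two_mul_mul_one_sub_le_half f
    have : 0 ≤ 1 - 2 * f * (1 - f) := by linarith
    positivity
  set x := 2 * f * (1 - f)
  refine le_of_mul_le_mul_right ?_ (by norm_num : (0 : ℝ) < 5151 / 10000)
  calc 4 * (1 - f) ^ 2 * (1 - x) * x ^ (23 / 40 : ℝ) * (5151 / 10000)
      = 4 * (1 - f) ^ 2 * (1 - x) * (x ^ (23 / 40 : ℝ) * (5151 / 10000)) := by ring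
    _ ≤ 4 * (1 - f) ^ 2 * (1 - x) * (23 / 40 * x + 17 / 40 * (21 / 100)) :=
        mul_le_mul_of_nonneg_left (rpow_twentythree_fortieths_mul_le hx) hc
    _ ≤ 1 * (5151 / 10000) := by
        rw [one_mul]
        exact four_mul_one_sub_sq_mul_tangent_le h0 h1

lemma two_mul_mul_one_sub_rpow_le {f : ℝ} (h0 : 0 ≤ f) (h1 : f ≤ 1 / 2) :
    (2 * f * (1 - f)) ^ (2.575 : ℝ) ≤ f ^ 2 / (f ^ 2 + (1 - f) ^ 2) := by
  have hx := two_mul_mul_one_sub_nonneg h0 (by linarith)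
  have hsplit : (2 * f * (1 - f)) ^ (2.575 : ℝ)
      = (2 * f * (1 - f)) ^ 2 * (2 * f * (1 - f)) ^ (23 / 40 : ℝ) := by
    rw [show (2.575 : ℝ) = (2 : ℕ) + 23 / 40 by norm_num, rpow_add' hx (by norm_num),
      rpow_natCast]
  rw [hsplit, le_div_iff₀ (by nlinarith [sq_nonneg f, sq_nonneg (1 - f)])]
  calc (2 * f * (1 - f)) ^ 2 * (2 * f * (1 - f)) ^ (23 / 40 : ℝ) * (f ^ 2 + (1 - f) ^ 2)
      = f ^ 2 * (4 * (1 - f) ^ 2 * (1 - 2 * f * (1 - f)) * (2 * f * (1 - f)) ^ (23 / 40 : ℝ)) := by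
        ring
    _ ≤ f ^ 2 * 1 := by
        gcongr
        exact four_mul_one_sub_sq_mul_rpow_le h0 h1
    _ = f ^ 2 := mul_one _

theorem stmt_5 :
    ∀ f : ℝ, f ∈ Set.Ioc (0:ℝ) (1/2) →
    ∀ ε : ℝ, ε ∈ Set.Ioo (0:ℝ) 1 →
    ∀ T : ℝ, T ≥ Real.logb 2 (1/ε) + 2.575 →
      (2*f*(1-f)) ^ T ≤ ε * f^2 / (f^2 + (1-f)^2) := by
  rintro f ⟨hf0, hf⟩ ε ⟨hε0, hε1⟩ T hT
  have hx0 : 0 < 2 * f * (1 - f) := by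
    have : 0 < 1 - f := by linarith
    positivity
  have hx := two_mul_mul_one_sub_le_half f
  calc (2 * f * (1 - f)) ^ T ≤ (2 * f * (1 - f)) ^ (logb 2 (1 / ε) + 2.575) :=
        rpow_le_rpow_of_exponent_ge hx0 (by linarith) hT
    _ = (2 * f * (1 - f)) ^ logb 2 (1 / ε) * (2 * f * (1 - f)) ^ (2.575 : ℝ) :=
        rpow_add hx0 _ _
    _ ≤ ε * (f ^ 2 / (f ^ 2 + (1 - f) ^ 2)) :=
        mul_le_mul (rpow_logb_one_div_le hx0.le hx hε0 hε1.le)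
          (two_mul_mul_one_sub_rpow_le hf0.le hf) (by positivity) hε0.le
    _ = ε * f ^ 2 / (f ^ 2 + (1 - f) ^ 2) := (mul_div_assoc _ _ _).symm
end

section
/- Let (S, d) be a metric space, let p_u, p_v, a ∈ S, and suppose M ∈ S satisfies d(p_u, p_v) = d(p_u, M) + d(M, p_v), d(p_u, a) = d(p_u, M) + d(M, a), and d(p_v, a) = d(p_v, M) + d(M, a). Then M maximizes the Nash product (d(p_u,a) - d(p_u,o))·(d(p_v,a) - d(p_v,o)) over all o ∈ S satisfying d(p_u,o) ≤ d(p_u,a) and d(p_v,o) ≤ d(p_v,a); moreover any other maximizer o* satisfies d(o*, a) ≥ d(M, a). -/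
/-- On a metric space, the median `M` of `p_u, p_v, a` maximizes the Nash
product subject to individual rationality, and is the closest maximizer to `a`. -/
theorem stmt_7 {S : Type*} [MetricSpace S] (pu pv a M : S)
    (h1 : dist pu pv = dist pu M + dist M pv)
    (h2 : dist pu a = dist pu M + dist M a)
    (h3 : dist pv a = dist pv M + dist M a) :
    (∀ o : S, dist pu o ≤ dist pu a → dist pv o ≤ dist pv a →
      (dist pu a - dist pu o) * (dist pv a - dist pv o) ≤
        (dist pu a - dist pu M) * (dist pv a - dist pv M)) ∧
    (∀ o : S, dist pu o ≤ dist pu a → dist pv o ≤ dist pv a →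
      (dist pu a - dist pu o) * (dist pv a - dist pv o) =
        (dist pu a - dist pu M) * (dist pv a - dist pv M) →
      dist o a ≥ dist M a) := by
  have hc1 : dist M pv = dist pv M := dist_comm M pv
  constructor
  · intro o ho1 ho2
    have t1 : dist pu pv ≤ dist pu o + dist o pv := dist_triangle pu o pv
    have hc2 : dist o pv = dist pv o := dist_comm o pv
    nlinarith [sq_nonneg ((dist pu a - dist pu o) - (dist pv a - dist pv o))]
  · intro o ho1 ho2 heq
    have t1 : dist pu pv ≤ dist pu o + dist o pv := dist_triangle pu o pv
    have t2 : dist pu a ≤ dist pu o + dist o a := dist_triangle pu o a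
    have hc2 : dist o pv = dist pv o := dist_comm o pv
    nlinarith [sq_nonneg ((dist pu a - dist pu o) - (dist pv a - dist pv o)),
      dist_nonneg (x := pu) (y := o)]
end

section
/- Let (S,d) be a metric space, a* a fixed point, and define Z_x = d(x, a*) for points x and Z_i = d(p_i, a*) for agents i. Suppose the bargaining outcome o = B(i,j,a) lies on a shortest path between p_i and p_j with d(o, p_i) = d(p_i,p_j)/2 + (d(p_i,a) - d(p_j,a))/2. Then for any agent u with bliss point p_u: d(o, p_u) ≤ Z_u + 2·min(Z_i, Z_j) + min(Z_a, max(Z_i, Z_j)). -/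
/-- If the bargaining outcome `o` lies on a shortest path between `p_i` and
`p_j` at distance `d(p_i,p_j)/2 + (d(p_i,a) - d(p_j,a))/2` from `p_i`, then its
distance to any agent's bliss point `p_u` is at most
`Z_u + 2·min(Z_i,Z_j) + min(Z_a, max(Z_i,Z_j))`, where `Z_x = d(x, a*)`. -/
theorem stmt_10 {S : Type*} [MetricSpace S] (astar pi pj pu a o : S)
    (hsp : dist pi pj = dist pi o + dist o pj)
    (ho : dist o pi = dist pi pj / 2 + (dist pi a - dist pj a) / 2) :
    dist o pu ≤ dist pu astar
      + 2 * min (dist pi astar) (dist pj astar)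
      + min (dist a astar) (max (dist pi astar) (dist pj astar)) := by
  have c1 : dist pi o = dist o pi := dist_comm _ _
  have c2 : dist astar pu = dist pu astar := dist_comm _ _
  have c3 : dist astar a = dist a astar := dist_comm _ _
  have c4 : dist a pj = dist pj a := dist_comm _ _
  have c5 : dist astar pj = dist pj astar := dist_comm _ _
  have t1 : dist o pu ≤ dist o astar + dist astar pu := dist_triangle _ _ _
  have t2 : dist o astar ≤ dist o pi + dist pi astar := dist_triangle _ _ _
  have t3 : dist o astar ≤ dist o pj + dist pj astar := dist_triangle _ _ _
  have t4 : dist pi pj ≤ dist pi astar + dist astar pj := dist_triangle _ _ _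
  have t5 : dist pi pj ≤ dist pi a + dist a pj := dist_triangle _ _ _
  have t6 : dist pi a ≤ dist pi astar + dist astar a := dist_triangle _ _ _
  have t7 : dist pj a ≤ dist pj astar + dist astar a := dist_triangle _ _ _
  -- d(o,pi) ≤ d(pi,a), d(o,pj) ≤ d(pj,a)
  have hopi : dist o pi ≤ dist pi a := by rw [ho]; linarith [t5, c4]
  have hopj : dist o pj ≤ dist pj a := by
    have : dist o pj = dist pi pj - dist o pi := by linarith [hsp, c1]
    rw [this, ho]; linarith [t5, c4]
  have n1 : (0:ℝ) ≤ dist pi astar := dist_nonneg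
  have n2 : (0:ℝ) ≤ dist pj astar := dist_nonneg
  have n3 : (0:ℝ) ≤ dist a astar := dist_nonneg
  have n4 : (0:ℝ) ≤ dist o pi := dist_nonneg
  have n5 : (0:ℝ) ≤ dist o pj := dist_nonneg
  simp only [min_def, max_def]
  split_ifs <;> linarith
end

section
/- Let (S,d) be a metric space, N a finite set of agents with bliss points p_i, a* the social cost minimizer with Z_i = d(p_i, a*), and a ∈ S with Z_a = d(a, a*). Suppose the bargaining function B satisfies d(B(i,j,a), p_k) ≤ Z_k + 2min(Z_i,Z_j) + min(Z_a, max(Z_i,Z_j)) for all i,j,k, and suppose Σ_i d(a, p_i) ≤ 3 Σ_i Z_i. Then (1/|N|²) Σ_{i,j} (Σ_k d(B(i,j,a), p_k))² ≤ 41 (Σ_i Z_i)². -/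
/-- Squared-Distortion bound of 41 for sequential deliberation in general
metric spaces. -/
theorem stmt_15 {S : Type*} [MetricSpace S]
    {N : Type*} [Fintype N] [Nonempty N]
    (p : N → S) (astar a : S) (B : N → N → S → S)
    (hB : ∀ i j k : N,
      dist (B i j a) (p k) ≤ dist (p k) astar
        + 2 * min (dist (p i) astar) (dist (p j) astar)
        + min (dist a astar) (max (dist (p i) astar) (dist (p j) astar)))
    (ha : (∑ i : N, dist a (p i)) ≤ 3 * ∑ i : N, dist (p i) astar) :
    (1 / (Fintype.card N : ℝ)^2) *
      ∑ i : N, ∑ j : N, (∑ k : N, dist (B i j a) (p k))^2 ≤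
    41 * (∑ i : N, dist (p i) astar)^2 := by
  classical
  set n : ℝ := (Fintype.card N : ℝ) with hn
  set Z : N → ℝ := fun i => dist (p i) astar with hZ
  set Zs : ℝ := ∑ i, Z i with hZs
  set Za : ℝ := dist a astar with hZa
  set X : N → N → ℝ := fun i j =>
    2 * min (Z i) (Z j) + min Za (max (Z i) (Z j)) with hX
  have hn1 : (1:ℝ) ≤ n := by
    have : 1 ≤ Fintype.card N := Fintype.card_pos
    rw [hn]; exact_mod_cast this
  have hZnn : ∀ i, 0 ≤ Z i := fun i => dist_nonneg
  have hZsnn : 0 ≤ Zs := Finset.sum_nonneg fun i _ => hZnn i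
  have hZann : 0 ≤ Za := dist_nonneg
  have hkey : n * Za ≤ 4 * Zs := by
    have h2 : n * Za = ∑ _i : N, Za := by
      simp [hn, mul_comm]
    calc n * Za = ∑ _i : N, Za := h2
      _ ≤ ∑ i : N, (dist a (p i) + Z i) :=
          Finset.sum_le_sum fun i _ => dist_triangle a (p i) astar
      _ = (∑ i : N, dist a (p i)) + Zs := by rw [Finset.sum_add_distrib]
      _ ≤ 3 * Zs + Zs := by linarith [ha]
      _ = 4 * Zs := by ring
  have hc : ∀ i j, (∑ k, dist (B i j a) (p k)) ≤ Zs + n * X i j := by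
    intro i j
    calc (∑ k, dist (B i j a) (p k)) ≤ ∑ k, (Z k + X i j) := by
          refine Finset.sum_le_sum fun k _ => ?_
          have := hB i j k
          simp only [hX, hZ, hZa]
          linarith
      _ = Zs + n * X i j := by
          rw [Finset.sum_add_distrib, Finset.sum_const, nsmul_eq_mul,
            Finset.card_univ, ← hn, ← hZs]
  have hmnn : ∀ i j, 0 ≤ min (Z i) (Z j) := fun i j => le_min (hZnn i) (hZnn j)
  have htnn : ∀ i j, 0 ≤ min Za (max (Z i) (Z j)) :=
    fun i j => le_min hZann ((hZnn i).trans (le_max_left _ _))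
  have ht2 : ∀ i j, min Za (max (Z i) (Z j)) ≤ Z i + Z j := by
    intro i j
    refine le_trans (min_le_right _ _) (max_le ?_ ?_)
    · linarith [hZnn j]
    · linarith [hZnn i]
  have hXnn : ∀ i j, 0 ≤ X i j := fun i j => by
    have := hmnn i j; have := htnn i j; simp only [hX]; linarith
  have hXle : ∀ i j, X i j ≤ 2 * (Z i + Z j) := by
    intro i j
    have h1 : 2 * min (Z i) (Z j) ≤ Z i + Z j := by
      have := min_le_left (Z i) (Z j); have := min_le_right (Z i) (Z j); linarith
    have := ht2 i j
    simp only [hX]; linarith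
  have hX2 : ∀ i j, (X i j)^2 ≤ 8 * (Z i * Z j) + Za * (Z i + Z j) := by
    intro i j
    have hmt : min (Z i) (Z j) * min Za (max (Z i) (Z j)) ≤ Z i * Z j := by
      rcases le_total (Z i) (Z j) with h | h
      · rw [min_eq_left h]
        have ht : min Za (max (Z i) (Z j)) ≤ Z j := by
          rw [max_eq_right h]; exact min_le_right _ _
        exact mul_le_mul_of_nonneg_left ht (hZnn i)
      · rw [min_eq_right h]
        have ht : min Za (max (Z i) (Z j)) ≤ Z i := by
          rw [max_eq_left h]; exact min_le_right _ _
        calc Z j * min Za (max (Z i) (Z j)) ≤ Z j * Z i :=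
              mul_le_mul_of_nonneg_left ht (hZnn j)
          _ = Z i * Z j := mul_comm _ _
    have hm1 : min (Z i) (Z j) ≤ Z i := min_le_left _ _
    have hm2 : min (Z i) (Z j) ≤ Z j := min_le_right _ _
    have ht1 : min Za (max (Z i) (Z j)) ≤ Za := min_le_left _ _
    have h2 := ht2 i j
    have h3 := hmnn i j
    have h4 := htnn i j
    simp only [hX]
    nlinarith [mul_le_mul_of_nonneg_left hm2 h3, mul_le_mul_of_nonneg_left ht1 h4]
  -- sum identities
  have S1 : (∑ i : N, ∑ j : N, (Z i + Z j)) = 2 * n * Zs := by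
    simp only [Finset.sum_add_distrib, Finset.sum_const, nsmul_eq_mul,
      ← Finset.sum_mul, ← Finset.mul_sum, Finset.card_univ]
    rw [← hZs, ← hn]; ring
  have S2 : (∑ i : N, ∑ j : N, Z i * Z j) = Zs^2 := by
    rw [← Finset.sum_mul_sum, ← hZs]; ring
  have hA : (∑ i : N, ∑ j : N, X i j) ≤ 4 * n * Zs := by
    calc (∑ i : N, ∑ j : N, X i j)
        ≤ ∑ i : N, ∑ j : N, 2 * (Z i + Z j) :=
          Finset.sum_le_sum fun i _ => Finset.sum_le_sum fun j _ => hXle i j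
      _ = 2 * ∑ i : N, ∑ j : N, (Z i + Z j) := by
          simp [Finset.mul_sum]
      _ = 4 * n * Zs := by rw [S1]; ring
  have hBq : (∑ i : N, ∑ j : N, (X i j)^2) ≤ 16 * Zs^2 := by
    calc (∑ i : N, ∑ j : N, (X i j)^2)
        ≤ ∑ i : N, ∑ j : N, (8 * (Z i * Z j) + Za * (Z i + Z j)) :=
          Finset.sum_le_sum fun i _ => Finset.sum_le_sum fun j _ => hX2 i j
      _ = 8 * (∑ i : N, ∑ j : N, Z i * Z j) + Za * ∑ i : N, ∑ j : N, (Z i + Z j) := by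
          simp only [Finset.sum_add_distrib, ← Finset.mul_sum]
      _ = 8 * Zs^2 + Za * (2 * n * Zs) := by rw [S1, S2]
      _ ≤ 16 * Zs^2 := by nlinarith [hkey, hZsnn]
  have hT : (∑ i : N, ∑ j : N, (∑ k : N, dist (B i j a) (p k))^2)
      ≤ 25 * n^2 * Zs^2 := by
    have h1 : ∀ i j, (∑ k : N, dist (B i j a) (p k))^2
        ≤ Zs^2 + 2 * Zs * n * X i j + n^2 * (X i j)^2 := by
      intro i j
      have hcnn : (0:ℝ) ≤ ∑ k : N, dist (B i j a) (p k) :=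
        Finset.sum_nonneg fun k _ => dist_nonneg
      calc (∑ k : N, dist (B i j a) (p k))^2
          ≤ (Zs + n * X i j)^2 := pow_le_pow_left₀ hcnn (hc i j) 2
        _ = Zs^2 + 2 * Zs * n * X i j + n^2 * (X i j)^2 := by ring
    calc (∑ i : N, ∑ j : N, (∑ k : N, dist (B i j a) (p k))^2)
        ≤ ∑ i : N, ∑ j : N, (Zs^2 + 2 * Zs * n * X i j + n^2 * (X i j)^2) :=
          Finset.sum_le_sum fun i _ => Finset.sum_le_sum fun j _ => h1 i j
      _ = n * (n * Zs^2) + 2 * Zs * n * (∑ i : N, ∑ j : N, X i j)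
            + n^2 * (∑ i : N, ∑ j : N, (X i j)^2) := by
          simp only [Finset.sum_add_distrib, Finset.sum_const, nsmul_eq_mul,
            ← Finset.mul_sum, Finset.card_univ]
          try rw [← hn]
          try ring
      _ ≤ n * (n * Zs^2) + 2 * Zs * n * (4 * n * Zs) + n^2 * (16 * Zs^2) := by
          have h2 : 0 ≤ 2 * Zs * n := by positivity
          have h3 : 0 ≤ n^2 := by positivity
          nlinarith [mul_le_mul_of_nonneg_left hA h2, mul_le_mul_of_nonneg_left hBq h3]
      _ = 25 * n^2 * Zs^2 := by ring
  have hn2 : (0:ℝ) < n^2 := by positivity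
  have hfinal : (1 / n^2) * (∑ i : N, ∑ j : N, (∑ k : N, dist (B i j a) (p k))^2)
      ≤ 25 * Zs^2 := by
    rw [div_mul_eq_mul_div, one_mul, div_le_iff₀ hn2]
    calc (∑ i : N, ∑ j : N, (∑ k : N, dist (B i j a) (p k))^2)
        ≤ 25 * n^2 * Zs^2 := hT
      _ = 25 * Zs^2 * n^2 := by ring
  calc (1 / n^2) * (∑ i : N, ∑ j : N, (∑ k : N, dist (B i j a) (p k))^2)
      ≤ 25 * Zs^2 := hfinal
    _ ≤ 41 * Zs^2 := by nlinarith [hZsnn]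
end

section
/- On the d-dimensional standard simplex with ℓ1 distance, with agents located at the vertices with probability masses p_1,...,p_d summing to 1, the stationary expected coordinates of sequential Nash bargaining satisfy s_i = (p_i/(1-p_i)) / (Σ_j p_j/(1-p_j)), where the s_i solve the system s_i = p_i² + Σ_{j≠i} 2 p_i p_j (1 + s_i - s_j)/2 together with Σ_i s_i = 1. -/
/-- On the standard simplex, the stationary expected coordinates of sequential
Nash bargaining: if `s` satisfies the stationarity system
`s_i = p_i² + Σ_{j≠i} 2 p_i p_j (1 + s_i - s_j)/2` with `Σ_i s_i = 1`, then
`s_i = (p_i/(1-p_i)) / (Σ_j p_j/(1-p_j))`. -/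
theorem stmt_16 {d : ℕ} (p s : Fin d → ℝ)
    (hp : ∀ i, p i ∈ Set.Ioo (0:ℝ) 1) (hpsum : ∑ i, p i = 1)
    (hssum : ∑ i, s i = 1)
    (hstat : ∀ i, s i = (p i)^2 +
      ∑ j ∈ Finset.univ.erase i, 2 * p i * p j * ((1 + s i - s j) / 2)) :
    ∀ i, s i = (p i / (1 - p i)) / (∑ j, p j / (1 - p j)) := by
  set T : ℝ := ∑ j, p j * s j with hT
  have key : ∀ i, s i = p i * (1 + s i - T) := by
    intro i
    have h := hstat i
    rw [Finset.sum_erase_eq_sub (Finset.mem_univ i)] at h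
    have expand : ∑ j, 2 * p i * p j * ((1 + s i - s j) / 2)
        = ∑ j, (p i * p j + (p i * s i) * p j - p i * (p j * s j)) := by
      apply Finset.sum_congr rfl
      intro j _
      ring
    rw [expand, Finset.sum_sub_distrib, Finset.sum_add_distrib,
      ← Finset.mul_sum, ← Finset.mul_sum, ← Finset.mul_sum, hpsum, ← hT] at h
    linear_combination h
  have hne : ∀ i, (1 : ℝ) - p i ≠ 0 := fun i => by
    have := (hp i).2; linarith
  have key2 : ∀ i, s i = (p i / (1 - p i)) * (1 - T) := by
    intro i
    have h := key i
    have hni := hne i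
    field_simp
    linarith [key i]
  set Q : ℝ := ∑ j, p j / (1 - p j) with hQ
  have hsumQ : Q * (1 - T) = 1 := by
    calc Q * (1 - T) = ∑ j, (p j / (1 - p j)) * (1 - T) := by rw [hQ, Finset.sum_mul]
    _ = ∑ j, s j := Finset.sum_congr rfl fun j _ => (key2 j).symm
    _ = 1 := hssum
  have hQne : Q ≠ 0 := fun h0 => by simp [h0] at hsumQ
  have h1T : 1 - T = 1 / Q := by
    rw [eq_div_iff hQne]
    linarith [hsumQ]
  intro i
  rw [key2 i, h1T, mul_one_div]
end

section
/- For α ∈ [0,1), with p_1 = α the largest mass and p_j summing to 1-α over j > 1, the quantity 1 / (α/(1-α) + Σ_{j>1} p_j/(1-p_j)) is at most (1-α)/(1 - α + α²), and max over α ∈ [0,1] of 1/(1 - α + α²) equals 4/3. -/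
/-- Distortion bound of sequential deliberation on the simplex:
`1/(α/(1-α) + Σ_{j>1} p_j/(1-p_j)) ≤ (1-α)/(1-α+α²)`, and the maximum of
`1/(1-α+α²)` over `α ∈ [0,1]` equals `4/3` (attained at `α = 1/2`). -/
theorem stmt_17 :
    (∀ (α : ℝ), α ∈ Set.Ico (0:ℝ) 1 →
      ∀ (m : ℕ) (q : Fin m → ℝ),
        (∀ j, q j ∈ Set.Ico (0:ℝ) 1) → (∑ j, q j) = 1 - α →
        1 / (α / (1 - α) + ∑ j, q j / (1 - q j)) ≤ (1 - α) / (1 - α + α^2)) ∧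
    (∀ α : ℝ, α ∈ Set.Icc (0:ℝ) 1 → 1 / (1 - α + α^2) ≤ 4/3) ∧
    1 / (1 - (1/2:ℝ) + (1/2:ℝ)^2) = 4/3 := by
  refine ⟨?_, ?_, by norm_num⟩
  · intro α hα m q hq hsum
    obtain ⟨hα0, hα1⟩ := hα
    have h1α : 0 < 1 - α := by linarith
    have hE : 0 < 1 - α + α^2 := by nlinarith
    have hsum' : (1 - α) ≤ ∑ j, q j / (1 - q j) := by
      rw [← hsum]
      apply Finset.sum_le_sum
      intro j _
      obtain ⟨h0, h1⟩ := hq j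
      rw [le_div_iff₀ (by linarith)]
      nlinarith
    have hD : (1 - α + α^2)/(1 - α) ≤ α / (1 - α) + ∑ j, q j / (1 - q j) := by
      have heq : (1 - α + α^2)/(1 - α) = α/(1-α) + (1-α) := by
        field_simp; ring
      rw [heq]; linarith
    have hDpos : 0 < (1 - α + α^2)/(1-α) := div_pos hE h1α
    calc 1 / (α / (1 - α) + ∑ j, q j / (1 - q j)) ≤ 1 / ((1-α+α^2)/(1-α)) :=
          one_div_le_one_div_of_le hDpos hD
      _ = (1-α)/(1-α+α^2) := one_div_div _ _
  · intro α ⟨h0, h1⟩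
    have hE : 3/4 ≤ 1 - α + α^2 := by nlinarith [sq_nonneg (α - 1/2)]
    calc 1/(1-α+α^2) ≤ 1/(3/4) := one_div_le_one_div_of_le (by norm_num) hE
      _ = 4/3 := by norm_num
end
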